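/- Let G be a characterizable reduced lexicographic Gröbner basis, i.e., ⟨G⟩ = sat(C) where C is the W-characteristic set of ⟨G⟩, and assume all parameters of C are ordered smaller than the other variables. Then C is normal. -/

import Mathlib

open MvPolynomial

namespace CharDec

variable {K : Type*} [Field K] {σ : Type*} [LinearOrder σ]

/-- Lexicographic comparison of exponent vectors (larger variables dominate):
`a ≤ b` iff `a = b` or at the greatest index where they differ, `a` is smaller. -/
def lexLe (a b : σ →₀ ℕ) : Prop :=
  a = b ∨ ∃ i : σ, a i < b i ∧ ∀ j : σ, i < j → a j = b j

/-- `m` is the leading monomial of `f` with respect to the lex term ordering. -/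
def IsLeadMon (f : MvPolynomial σ K) (m : σ →₀ ℕ) : Prop :=
  m ∈ f.support ∧ ∀ m' ∈ f.support, lexLe m' m

/-- `f` has leading (greatest actually occurring) variable `i`. -/
def HasLV (f : MvPolynomial σ K) (i : σ) : Prop :=
  i ∈ f.vars ∧ ∀ j ∈ f.vars, j ≤ i

/-- The coefficient of `(X i) ^ d` in `f`, as a polynomial in the remaining variables. -/
noncomputable def coeffWrt (i : σ) (d : ℕ) (f : MvPolynomial σ K) :
    MvPolynomial σ K :=
  ∑ m ∈ f.support.filter (fun m => m i = d), monomial (m.update i 0) (f.coeff m)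

/-- The initial (leading coefficient in the leading variable) of `f` with
respect to the variable `i`. -/
noncomputable def initialWrt (i : σ) (f : MvPolynomial σ K) : MvPolynomial σ K :=
  coeffWrt i (f.degreeOf i) f

/-- `R` is the pseudo-remainder of `P` on pseudo-division by `Q` with respect
to the variable `y` (classical pseudo-division, with the exponent
`deg P - deg Q + 1` when `deg P ≥ deg Q`, and `0` otherwise). -/
def IsPrem (y : σ) (Q P R : MvPolynomial σ K) : Prop :=
  ∃ A : MvPolynomial σ K,
    (initialWrt y Q) ^ (P.degreeOf y + 1 - Q.degreeOf y) * P = A * Q + R ∧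
    R.degreeOf y < Q.degreeOf y

/-- `IterPrem P L R` : `R` is the iterated pseudo-remainder of `P` by the
list `L` of pairs (leading variable, divisor), divisors being used from the
head of the list on. -/
def IterPrem : MvPolynomial σ K → List (σ × MvPolynomial σ K) →
    MvPolynomial σ K → Prop
  | P, [], R => R = P
  | P, e :: L, R => ∃ S, IsPrem e.1 e.2 P S ∧ IterPrem S L R

/-- A triangular set: a list of (leading variable, polynomial) pairs with
strictly increasing leading variables. -/
structure TriSet (K : Type*) [Field K] (σ : Type*) [LinearOrder σ] where
  elems : List (σ × MvPolynomial σ K)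
  sorted : elems.Pairwise (fun e e' => e.1 < e'.1)
  hlv : ∀ e ∈ elems, HasLV e.2 e.1

namespace TriSet

/-- The list of leading variables of a triangular set. -/
def lvs (T : TriSet K σ) : List σ := T.elems.map Prod.fst

/-- The list of polynomials of a triangular set. -/
def polys (T : TriSet K σ) : List (MvPolynomial σ K) := T.elems.map Prod.snd

/-- A variable is a parameter of `T` if it is not a leading variable of `T`. -/
def IsParam (T : TriSet K σ) (j : σ) : Prop := j ∉ T.lvs

/-- `T` is normal: every initial involves only the parameters of `T`. -/
def Normal (T : TriSet K σ) : Prop :=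
  ∀ e ∈ T.elems, ∀ j ∈ (initialWrt e.1 e.2).vars, T.IsParam j

/-- `T` is zero-dimensional: every variable is a leading variable of `T`. -/
def ZeroDim (T : TriSet K σ) : Prop := ∀ i : σ, i ∈ T.lvs

/-- The product of the initials of `T`. -/
noncomputable def prodInit (T : TriSet K σ) : MvPolynomial σ K :=
  (T.elems.map fun e => initialWrt e.1 e.2).prod

/-- The ideal generated by the polynomials of `T`. -/
noncomputable def ideal (T : TriSet K σ) : Ideal (MvPolynomial σ K) :=
  Ideal.span {p | ∃ e ∈ T.elems, p = e.2}

end TriSet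

/-- The saturation `I : J^∞` of an ideal `I` by an element `J`. -/
def satBy (I : Ideal (MvPolynomial σ K)) (J : MvPolynomial σ K) :
    Ideal (MvPolynomial σ K) where
  carrier := {p | ∃ k : ℕ, J ^ k * p ∈ I}
  zero_mem' := ⟨0, by simp⟩
  add_mem' := by
    rintro a b ⟨k, hk⟩ ⟨l, hl⟩
    refine ⟨k + l, ?_⟩
    have h : J ^ (k + l) * (a + b) = J ^ l * (J ^ k * a) + J ^ k * (J ^ l * b) := by ring
    rw [h]
    exact add_mem (Ideal.mul_mem_left _ _ hk) (Ideal.mul_mem_left _ _ hl)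
  smul_mem' := by
    rintro c a ⟨k, hk⟩
    refine ⟨k, ?_⟩
    have h : J ^ k * (c • a) = c * (J ^ k * a) := by rw [smul_eq_mul]; ring
    rw [h]
    exact Ideal.mul_mem_left _ _ hk

namespace TriSet

/-- The saturated ideal `sat(T) = ⟨T⟩ : (∏ initials)^∞` of a triangular set. -/
noncomputable def sat (T : TriSet K σ) : Ideal (MvPolynomial σ K) :=
  satBy T.ideal T.prodInit

/-- The triangular set formed by the first `i` elements of `T`. -/
def take (T : TriSet K σ) (i : ℕ) : TriSet K σ :=
  ⟨T.elems.take i, T.sorted.sublist (List.take_sublist i T.elems),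
    fun e he => T.hlv e (List.mem_of_mem_take he)⟩

/-- `T` is a regular set: each initial is neither zero nor a zero-divisor
modulo the saturated ideal of the preceding subset. -/
def Regular (T : TriSet K σ) : Prop :=
  ∀ i : ℕ, ∀ h : i < T.elems.length,
    initialWrt (T.elems.get ⟨i, h⟩).1 (T.elems.get ⟨i, h⟩).2 ∉ (T.take i).sat ∧
    ∀ p : MvPolynomial σ K,
      initialWrt (T.elems.get ⟨i, h⟩).1 (T.elems.get ⟨i, h⟩).2 * p ∈ (T.take i).sat →
        p ∈ (T.take i).sat

end TriSet

/-- The zero set, in (the algebraic closure of `K`)^σ, of a set of polynomials. -/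
def zeroSet (S : Set (MvPolynomial σ K)) : Set (σ → AlgebraicClosure K) :=
  {x | ∀ p ∈ S, aeval x p = 0}

/-- `Zero(T / ini(T))` : the common zeros of `T` at which no initial of `T` vanishes. -/
def TriSet.zeroQuasi (T : TriSet K σ) : Set (σ → AlgebraicClosure K) :=
  {x | (∀ e ∈ T.elems, aeval x e.2 = 0) ∧
       (∀ e ∈ T.elems, aeval x (initialWrt e.1 e.2) ≠ 0)}

/-- `G` is a (finite) Gröbner basis of `I` with respect to the lex term
ordering: `G ⊆ I` and the leading monomial of every nonzero element of `I` is
divisible by the leading monomial of some element of `G`. -/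
def IsGB (G : Set (MvPolynomial σ K)) (I : Ideal (MvPolynomial σ K)) : Prop :=
  G.Finite ∧ G ⊆ ↑I ∧
  ∀ f ∈ I, f ≠ 0 → ∃ g ∈ G, ∃ mf mg, IsLeadMon f mf ∧ IsLeadMon g mg ∧ ∀ j, mg j ≤ mf j

/-- `G` is the reduced lex Gröbner basis of `I`. -/
def IsReducedGB (G : Set (MvPolynomial σ K)) (I : Ideal (MvPolynomial σ K)) : Prop :=
  IsGB G I ∧ (0 : MvPolynomial σ K) ∉ G ∧
  (∀ g ∈ G, ∀ m, IsLeadMon g m → g.coeff m = 1) ∧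
  (∀ g ∈ G, ∀ g' ∈ G, g' ≠ g → ∀ m ∈ g.support, ∀ m', IsLeadMon g' m' →
    ¬ (∀ j, m' j ≤ m j))

/-- `C` is the W-characteristic set extracted from the (reduced lex Gröbner
basis) `G`: for each leading variable occurring in `G`, `C` contains the
lex-minimal element of `G` with that leading variable. -/
def IsWCharOf (C : TriSet K σ) (G : Set (MvPolynomial σ K)) : Prop :=
  (∀ e ∈ C.elems, e.2 ∈ G ∧
    ∀ g ∈ G, HasLV g e.1 → ∀ mg me, IsLeadMon g mg → IsLeadMon e.2 me → lexLe me mg) ∧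
  (∀ g ∈ G, ∀ i : σ, HasLV g i → i ∈ C.lvs)

/-- The Sylvester-style matrix of two univariate polynomials. -/
noncomputable def sylvester {R : Type*} [CommRing R] (f g : Polynomial R) :
    Matrix (Fin (f.natDegree + g.natDegree)) (Fin (f.natDegree + g.natDegree)) R :=
  Matrix.of fun i j =>
    if (i : ℕ) < g.natDegree then
      (if (i : ℕ) ≤ (j : ℕ) then f.coeff ((j : ℕ) - (i : ℕ)) else 0)
    else
      (if (i : ℕ) - g.natDegree ≤ (j : ℕ) then g.coeff ((j : ℕ) - ((i : ℕ) - g.natDegree))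
       else 0)

/-- The resultant of two univariate polynomials, as the determinant of their
Sylvester matrix. -/
noncomputable def resultantP {R : Type*} [CommRing R] (f g : Polynomial R) : R :=
  (sylvester f g).det

/-- View a multivariate polynomial as a univariate polynomial in the variable `i`. -/
noncomputable def toUni (i : σ) (f : MvPolynomial σ K) :
    Polynomial (MvPolynomial σ K) :=
  aeval (fun j => if j = i then Polynomial.X else Polynomial.C (X j)) f

/-- The resultant of two multivariate polynomials with respect to the variable `i`. -/
noncomputable def resWrt (i : σ) (f g : MvPolynomial σ K) : MvPolynomial σ K :=
  resultantP (toUni i f) (toUni i g)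

/-- The iterated resultant of `f` with respect to a list of
(leading variable, divisor) pairs, used from the head of the list on. -/
noncomputable def iterRes : MvPolynomial σ K → List (σ × MvPolynomial σ K) →
    MvPolynomial σ K
  | f, [] => f
  | f, e :: L => iterRes (resWrt e.1 f e.2) L

end CharDec

open CharDec MvPolynomial

/-!
Induction on the leading variable `x` of `e ∈ C`: assume the elements `C_{<x}` of `C` below `x`
have initials in the parameters `P`. Over `K(P)` they form a monic triangular set, so after
clearing denominators, multiplication by `I = ini(e)` on the span of the monomials reduced with
respect to `C_{<x}` is a matrix `M` over `K[P]`.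
* If `det M = 0`, a kernel vector gives a reduced `u ≠ 0` with `I u ∈ ⟨C_{<x}⟩`, so
  `u ∈ sat(C) = ⟨G⟩`. Since each element of `C` is lex-minimal in `G` for its leading variable,
  the Gröbner property forces a monomial of `u` not reduced with respect to `C`: impossible.
* Otherwise the adjugate gives `u` with `I u ≡ c (mod ⟨C_{<x}⟩)`, `0 ≠ c ∈ K[P]`. Reducing `u e`
  gives an element of `⟨G⟩` with leading monomial `(parameters) · xᵈ`, whose Gröbner divisor can
  only be compared with `e`. If `I` involved a leading variable `j`, the monomial of `e` carrying
  `j` would be lex-below that leading monomial, yet the comparison is decided at a parameter,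
  which lies below `j`.
-/

namespace CharDec

open scoped Pointwise

variable {K : Type*} [Field K] {σ : Type*}

section Support

theorem apply_eq_zero_of_mem_support {f : MvPolynomial σ K} {m : σ →₀ ℕ} (hm : m ∈ f.support)
    {v : σ} (hv : v ∉ f.vars) : m v = 0 := by
  by_contra h
  exact hv ((mem_vars_iff_mem_support v).mpr ⟨m, hm, Finsupp.mem_support_iff.mpr h⟩)

theorem ne_zero_of_mem_support {f : MvPolynomial σ K} {m : σ →₀ ℕ} (hm : m ∈ f.support) :
    f ≠ 0 :=
  ne_zero_iff.mpr ⟨m, mem_support_iff.mp hm⟩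

theorem apply_le_degreeOf {f : MvPolynomial σ K} {m : σ →₀ ℕ} (hm : m ∈ f.support) (v : σ) :
    m v ≤ degreeOf v f :=
  degreeOf_le_iff.mp le_rfl m hm

theorem exists_mem_support_apply_eq_degreeOf {f : MvPolynomial σ K} (hf : f ≠ 0) (v : σ) :
    ∃ m ∈ f.support, m v = degreeOf v f := by
  rw [degreeOf_eq_sup]
  obtain ⟨m, hm, h⟩ := Finset.exists_mem_eq_sup _ (support_nonempty.mpr hf) fun m : σ →₀ ℕ => m v
  exact ⟨m, hm, h.symm⟩

theorem mem_supported_iff_apply_eq_zero {P : Set σ} {p : MvPolynomial σ K} :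
    p ∈ supported K P ↔ ∀ m ∈ p.support, ∀ w ∉ P, m w = 0 := by
  rw [mem_supported]
  refine ⟨fun h m hm w hw => apply_eq_zero_of_mem_support hm fun hv => hw (h hv), fun h v hv => ?_⟩
  obtain ⟨m, hm, hvm⟩ := (mem_vars_iff_mem_support v).mp hv
  by_contra hvP
  exact Finsupp.mem_support_iff.mp hvm (h m hm v hvP)

theorem mul_mem_restrictSupport {s t u : Set (σ →₀ ℕ)} (h : s + t ⊆ u)
    {p q : MvPolynomial σ K} (hp : p ∈ restrictSupport K s) (hq : q ∈ restrictSupport K t) :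
    p * q ∈ restrictSupport K u :=
  restrictSupport_mono (R := K) h (restrictSupport_add K s t ▸ Submodule.mul_mem_mul hp hq)

end Support

section Initial

theorem coeff_coeffWrt (y : σ) (D : ℕ) (f : MvPolynomial σ K) (m : σ →₀ ℕ) :
    coeff m (coeffWrt y D f) = if m y = 0 then coeff (m.update y D) f else 0 := by
  classical
  have key : ∀ m' : σ →₀ ℕ, m' y = D → (m'.update y 0 = m ↔ m y = 0 ∧ m' = m.update y D) := by
    intro m' hm'
    constructor
    · rintro rfl
      simp [← hm']
    · rintro ⟨hm, rfl⟩
      ext w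
      by_cases hw : w = y <;> simp [Finsupp.update_apply, hw, hm]
  simp only [coeffWrt, coeff_sum, coeff_monomial]
  split_ifs with hm
  · rw [Finset.sum_eq_single (m.update y D)]
    · rw [if_pos ((key _ (by simp)).mpr ⟨hm, rfl⟩)]
    · intro m' hm' hne
      rw [if_neg fun h => hne ((key m' (Finset.mem_filter.mp hm').2).mp h).2]
    · intro hnot
      rw [if_pos ((key _ (by simp)).mpr ⟨hm, rfl⟩)]
      by_contra h
      exact hnot (Finset.mem_filter.mpr ⟨mem_support_iff.mpr h, by simp⟩)
  · exact Finset.sum_eq_zero fun m' hm' =>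
      if_neg fun h => hm ((key m' (Finset.mem_filter.mp hm').2).mp h).1

theorem mem_support_initialWrt {y : σ} {f : MvPolynomial σ K} {m : σ →₀ ℕ}
    (hm : m ∈ (initialWrt y f).support) :
    m y = 0 ∧ m.update y (degreeOf y f) ∈ f.support := by
  rw [mem_support_iff, initialWrt, coeff_coeffWrt] at hm
  split_ifs at hm with hmy
  · exact ⟨hmy, mem_support_iff.mpr hm⟩
  · exact absurd rfl hm

theorem vars_initialWrt {y : σ} {f : MvPolynomial σ K} {v : σ}
    (hv : v ∈ (initialWrt y f).vars) : v ∈ f.vars ∧ v ≠ y := by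
  classical
  obtain ⟨m, hm, hvm⟩ := (mem_vars_iff_mem_support v).mp hv
  obtain ⟨hmy, hmf⟩ := mem_support_initialWrt hm
  have hvy : v ≠ y := by
    rintro rfl
    simp [hmy] at hvm
  refine ⟨(mem_vars_iff_mem_support v).mpr ⟨_, hmf, ?_⟩, hvy⟩
  simpa [Finsupp.update_apply, hvy] using hvm

theorem initialWrt_ne_zero {f : MvPolynomial σ K} (hf : f ≠ 0) (y : σ) :
    initialWrt y f ≠ 0 := by
  classical
  obtain ⟨m, hm, hmy⟩ := exists_mem_support_apply_eq_degreeOf hf y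
  intro h
  have : coeff (m.update y 0) (initialWrt y f) = coeff m f := by
    rw [initialWrt, coeff_coeffWrt, if_pos (by simp)]
    congr 1
    ext w
    by_cases hw : w = y <;> simp [Finsupp.update_apply, hw, hmy]
  rw [h, coeff_zero] at this
  exact mem_support_iff.mp hm this.symm

theorem apply_lt_of_mem_support_sub_initialWrt {y : σ} {f : MvPolynomial σ K} {m : σ →₀ ℕ}
    (hm : m ∈ (f - initialWrt y f * monomial (Finsupp.single y (degreeOf y f)) 1).support) :
    m y < degreeOf y f := by
  classical
  set D := degreeOf y f
  have hle : m y ≤ D := by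
    rcases Finset.mem_union.mp (support_sub σ _ _ hm) with h | h
    · exact apply_le_degreeOf h y
    · obtain ⟨a, ha, b, hb, rfl⟩ := Finset.mem_add.mp (support_mul _ _ h)
      rw [Finset.mem_singleton.mp (support_monomial_subset hb)]
      simp [(mem_support_initialWrt ha).1]
  refine hle.lt_of_ne fun hmy => mem_support_iff.mp hm ?_
  have hs : Finsupp.single y D ≤ m := Finsupp.single_le_iff.mpr hmy.ge
  have hupd : (m - Finsupp.single y D).update y D = m := by
    ext w
    by_cases hw : w = y <;> simp [Finsupp.update_apply, hw, hmy]
  rw [coeff_sub, coeff_mul_monomial', if_pos hs, mul_one, initialWrt, coeff_coeffWrt,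
    if_pos (by simp [hmy]), hupd, sub_self]

theorem vars_sub_initialWrt_mul_subset (y : σ) (f : MvPolynomial σ K) :
    (f - initialWrt y f * monomial (Finsupp.single y (degreeOf y f)) 1).vars ⊆ f.vars := by
  classical
  intro v hv
  rcases Finset.mem_union.mp (vars_sub_subset f hv) with h | h
  · exact h
  rcases Finset.mem_union.mp (vars_mul _ _ h) with h | h
  · exact (vars_initialWrt h).1
  · rw [vars_monomial one_ne_zero] at h
    obtain ⟨rfl, hd⟩ := (Finsupp.mem_support_single _ _ _).mp h
    exact mem_vars_iff_degreeOf_ne_zero.mpr hd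

end Initial

section Box

def boundedOutside (P : Set σ) (b : σ →₀ ℕ) : Set (σ →₀ ℕ) := {m | ∀ w ∉ P, m w ≤ b w}

theorem mul_mem_restrictSupport_boundedOutside {P : Set σ} {b : σ →₀ ℕ} {p q : MvPolynomial σ K}
    (hp : p ∈ supported K P) (hq : q ∈ restrictSupport K (boundedOutside P b)) :
    p * q ∈ restrictSupport K (boundedOutside P b) := by
  refine mul_mem_restrictSupport (s := {m | ∀ w ∉ P, m w = 0}) ?_
    (fun m hm => mem_supported_iff_apply_eq_zero.mp hp m hm) hq
  rw [Set.add_subset_iff]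
  intro m hm n hn w hw
  simpa [hm w hw] using hn w hw

theorem sum_smul_monomial_mem_restrictSupport [DecidableEq σ] {P : Set σ} {b : σ →₀ ℕ}
    (c : Finset.Iic b → supported K P) :
    ∑ a, c a • monomial (a : σ →₀ ℕ) (1 : K) ∈ restrictSupport K (boundedOutside P b) := by
  refine Submodule.sum_mem _ fun a _ => ?_
  rw [Subalgebra.smul_def, smul_eq_mul]
  refine mul_mem_restrictSupport_boundedOutside (c a).2 ?_
  rw [monomial_mem_restrictSupport]
  exact Or.inl fun w _ => Finset.mem_Iic.mp a.2 w

theorem exists_eq_sum_smul_monomial [DecidableEq σ] {P : Set σ} {b : σ →₀ ℕ} {q : MvPolynomial σ K}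
    (hq : q ∈ restrictSupport K (boundedOutside P b)) :
    ∃ c : Finset.Iic b → supported K P, q = ∑ a, c a • monomial (a : σ →₀ ℕ) (1 : K) := by
  classical
  let outer : (σ →₀ ℕ) → σ →₀ ℕ := fun m => m.filter (· ∉ P)
  let coeffPoly : (σ →₀ ℕ) → MvPolynomial σ K := fun a =>
    ∑ m ∈ q.support with outer m = a, monomial (m.filter (· ∈ P)) (coeff m q)
  have hmem : ∀ a, coeffPoly a ∈ supported K P := fun a =>
    Subalgebra.sum_mem _ fun m _ => mem_supported_iff_apply_eq_zero.mpr fun n hn w hw => by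
      rw [Finset.mem_singleton.mp (support_monomial_subset hn), Finsupp.filter_apply_neg _ _ hw]
  refine ⟨fun a => ⟨coeffPoly a, hmem a⟩, ?_⟩
  simp only [Subalgebra.smul_def, smul_eq_mul]
  rw [Finset.sum_coe_sort (Finset.Iic b) fun a => coeffPoly a * monomial a 1]
  simp only [coeffPoly, Finset.sum_mul, monomial_mul, mul_one]
  have hfiber : ∀ a ∈ Finset.Iic b, ∀ m ∈ {m ∈ q.support | outer m = a},
      monomial (m.filter (· ∈ P) + a) (coeff m q) = monomial m (coeff m q) := by
    intro a _ m hm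
    rw [← (Finset.mem_filter.mp hm).2, Finsupp.filter_add_filter_not]
  have hmaps : ∀ m ∈ q.support, outer m ∈ Finset.Iic b := fun m hm =>
    Finset.mem_Iic.mpr fun w => by
      by_cases hw : w ∈ P
      · simp [outer, hw]
      · simpa [outer, hw] using (Finset.mem_coe.mpr hm |> hq) w hw
  rw [Finset.sum_congr rfl fun a ha => Finset.sum_congr rfl (hfiber a ha),
    Finset.sum_fiberwise_of_maps_to hmaps, ← q.as_sum]

theorem sum_smul_monomial_eq_zero [DecidableEq σ] {P : Set σ} {b : σ →₀ ℕ}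
    (hb : ∀ w ∈ P, b w = 0) {c : Finset.Iic b → supported K P}
    (h : ∑ a, c a • monomial (a : σ →₀ ℕ) (1 : K) = 0) : c = 0 := by
  funext a₀
  ext m
  by_contra hm
  have hmP := mem_supported_iff_apply_eq_zero.mp (c a₀).2 m (mem_support_iff.mpr hm)
  -- the part of `m + a₀` outside `P` is `a₀`, so only the term of index `a₀` contributes
  have : coeff (m + (a₀ : σ →₀ ℕ)) (∑ a, c a • monomial (a : σ →₀ ℕ) (1 : K)) =
      coeff m (c a₀ : MvPolynomial σ K) := by
    simp only [Subalgebra.smul_def, smul_eq_mul, coeff_sum]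
    rw [Finset.sum_eq_single a₀ _ (by simp), coeff_mul_monomial, mul_one]
    intro a _ ha
    rw [coeff_mul_monomial']
    split_ifs with hle
    · rw [mul_one]
      by_contra hne
      have hP := mem_supported_iff_apply_eq_zero.mp (c a).2 _ (mem_support_iff.mpr hne)
      refine ha (Subtype.ext (Finsupp.ext fun w => ?_))
      have h₁ := Finsupp.le_def.mp hle w
      by_cases hw : w ∈ P
      · have := Finset.mem_Iic.mp a.2 w
        have := Finset.mem_Iic.mp a₀.2 w
        simp only [hb w hw, nonpos_iff_eq_zero] at *
        omega
      · have := hP w hw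
        simp only [Finsupp.add_apply, Finsupp.tsub_apply, hmP w hw] at this h₁
        omega
    · rfl
  rw [h, coeff_zero] at this
  exact hm (by simpa using this.symm)

end Box

section LinearAlgebra

open Matrix

variable {S R B : Type*} [CommRing S] [CommRing R] [Algebra S R] [Fintype B]
  {N : Ideal R} {a : R} {x : B → R}

theorem mul_sum_smul_sub_sum_mulVec_mem {M : Matrix B B S}
    (hM : ∀ β, a * x β - ∑ γ, M γ β • x γ ∈ N) (w : B → S) :
    a * ∑ β, w β • x β - ∑ γ, (M *ᵥ w) γ • x γ ∈ N := by
  have : a * ∑ β, w β • x β - ∑ γ, (M *ᵥ w) γ • x γ =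
      ∑ β, w β • (a * x β - ∑ γ, M γ β • x γ) := by
    simp only [Matrix.mulVec, dotProduct, Finset.sum_smul, Finset.mul_sum, smul_sub,
      Finset.smul_sum, mul_smul_comm, smul_smul, Finset.sum_sub_distrib]
    rw [Finset.sum_comm (γ := B) (f := fun γ β => (M γ β * w β) • x γ)]
    simp only [mul_comm]
  rw [this]
  exact N.sum_mem fun β _ => N.smul_of_tower_mem (w β) (hM β)

/-- `w` is a kernel vector of `M` (and `c = 0`) if `det M = 0`; otherwise it is a column of the
adjugate of `M`, and `c = det M`. -/
theorem exists_mul_sum_smul_sub_algebraMap_mem [IsDomain S] [DecidableEq B] {β₀ : B}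
    (hx : x β₀ = 1) (M : Matrix B B S) (hM : ∀ β, a * x β - ∑ γ, M γ β • x γ ∈ N) :
    ∃ (w : B → S) (c : S), (w ≠ 0 ∨ c ≠ 0) ∧ a * ∑ β, w β • x β - algebraMap S R c ∈ N := by
  by_cases hdet : M.det = 0
  · obtain ⟨w, hw, hMw⟩ := Matrix.exists_mulVec_eq_zero_iff.mpr hdet
    exact ⟨w, 0, Or.inl hw, by simpa [hMw] using mul_sum_smul_sub_sum_mulVec_mem hM w⟩
  · refine ⟨fun β => M.adjugate β β₀, M.det, Or.inr hdet, ?_⟩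
    have hcol : M *ᵥ (fun β => M.adjugate β β₀) = Pi.single β₀ M.det := by
      ext γ
      simpa [Matrix.mul_apply, Matrix.mulVec, dotProduct, Matrix.one_apply, Pi.single_apply]
        using congrFun (congrFun (Matrix.mul_adjugate M) γ) β₀
    simpa [hcol, Pi.single_apply, hx, Algebra.algebraMap_eq_smul_one] using
      mul_sum_smul_sub_sum_mulVec_mem hM (fun β => M.adjugate β β₀)

theorem exists_smul_mul_sub_sum_smul_mem [IsDomain S] [DecidableEq B]
    (h : ∀ β, ∃ d : S, d ≠ 0 ∧ ∃ col : B → S, d • (a * x β) - ∑ γ, col γ • x γ ∈ N) :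
    ∃ D : S, D ≠ 0 ∧ ∃ M : Matrix B B S, ∀ β, (D • a) * x β - ∑ γ, M γ β • x γ ∈ N := by
  choose d hd col hcol using h
  refine ⟨∏ β, d β, Finset.prod_ne_zero_iff.mpr fun β _ => hd β,
    fun γ β => (∏ β' ∈ Finset.univ.erase β, d β') * col β γ, fun β => ?_⟩
  convert N.smul_of_tower_mem (∏ β' ∈ Finset.univ.erase β, d β') (hcol β) using 1
  rw [← Finset.mul_prod_erase _ d (Finset.mem_univ β), smul_sub, Finset.smul_sum, smul_mul_assoc,
    mul_comm, mul_smul]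
  simp only [mul_smul]

end LinearAlgebra

variable [LinearOrder σ]

section LeadingMonomial

theorem lexLe_iff_toColex_le {a b : σ →₀ ℕ} : lexLe a b ↔ toColex a ≤ toColex b := by
  rw [le_iff_eq_or_lt, Finsupp.Colex.lt_iff]
  simp [lexLe, and_comm]

theorem lexLe_trans {a b c : σ →₀ ℕ} (hab : lexLe a b) (hbc : lexLe b c) : lexLe a c := by
  rw [lexLe_iff_toColex_le] at *
  exact hab.trans hbc

theorem lexLe.apply_le_of_forall_lt {a b : σ →₀ ℕ} (h : lexLe a b) {v : σ}
    (hb : ∀ w, v < w → b w = 0) : (∀ w, v < w → a w = 0) ∧ a v ≤ b v := by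
  rcases h with rfl | ⟨i, hi, hab⟩
  · exact ⟨hb, le_rfl⟩
  have hiv : i ≤ v := not_lt.mp fun hvi => by simp [hb i hvi] at hi
  refine ⟨fun w hw => (hab w (hiv.trans_lt hw)).trans (hb w hw), ?_⟩
  rcases hiv.lt_or_eq with hiv | rfl
  · exact (hab v hiv).le
  · exact hi.le

theorem lexLe.apply_eq_of_forall_lt {a b : σ →₀ ℕ} (h : lexLe a b) {j : σ}
    (hlt : ∀ i, a i < b i → i < j) : a j = b j := by
  rcases h with rfl | ⟨i, hi, hab⟩
  · rfl
  · exact hab j (hlt i hi)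

theorem exists_isLeadMon {f : MvPolynomial σ K} (hf : f ≠ 0) : ∃ m, IsLeadMon f m := by
  obtain ⟨m, hm, hmax⟩ := f.support.exists_max_image toColex (support_nonempty.mpr hf)
  exact ⟨m, hm, fun m' hm' => lexLe_iff_toColex_le.mpr (hmax m' hm')⟩

theorem HasLV.ne_zero {f : MvPolynomial σ K} {v : σ} (h : HasLV f v) : f ≠ 0 := by
  rintro rfl
  simpa using h.1

theorem HasLV.degreeOf_pos {f : MvPolynomial σ K} {v : σ} (h : HasLV f v) : 0 < degreeOf v f :=
  Nat.pos_of_ne_zero (mem_vars_iff_degreeOf_ne_zero.mp h.1)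

theorem HasLV.apply_eq_zero {f : MvPolynomial σ K} {v : σ} (h : HasLV f v) {m : σ →₀ ℕ}
    (hm : m ∈ f.support) {w : σ} (hw : v < w) : m w = 0 :=
  apply_eq_zero_of_mem_support hm fun hwv => (h.2 w hwv).not_gt hw

theorem HasLV.leadMon_apply {f : MvPolynomial σ K} {v : σ} (h : HasLV f v) {m : σ →₀ ℕ}
    (hm : IsLeadMon f m) : m v = degreeOf v f := by
  obtain ⟨m₀, hm₀, hm₀v⟩ := exists_mem_support_apply_eq_degreeOf h.ne_zero v
  have := ((hm.2 m₀ hm₀).apply_le_of_forall_lt fun w => h.apply_eq_zero hm.1).2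
  exact le_antisymm (apply_le_degreeOf hm.1 v) (hm₀v ▸ this)

theorem IsLeadMon.unique {f : MvPolynomial σ K} {m₁ m₂ : σ →₀ ℕ} (h₁ : IsLeadMon f m₁)
    (h₂ : IsLeadMon f m₂) : m₁ = m₂ :=
  toColex_inj.mp <| le_antisymm (lexLe_iff_toColex_le.mp (h₂.2 m₁ h₁.1))
    (lexLe_iff_toColex_le.mp (h₁.2 m₂ h₂.1))

theorem isLeadMon_mul_monomial_add {A r : MvPolynomial σ K} (hA : A ≠ 0) {x : σ} {d : ℕ}
    (hAx : ∀ w ∈ A.vars, w < x) (hrx : degreeOf x r < d)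
    (hr : ∀ w, x < w → degreeOf w r = 0) :
    ∃ m ∈ A.support, IsLeadMon (A * monomial (Finsupp.single x d) 1 + r)
      (m + Finsupp.single x d) := by
  set f := A * monomial (Finsupp.single x d) 1 + r
  have hAzero : ∀ m ∈ A.support, ∀ w, x ≤ w → m w = 0 := fun m hm w hw =>
    apply_eq_zero_of_mem_support hm fun hwA => (hAx w hwA).not_ge hw
  have hrx' : ∀ m ∈ r.support, m x < d := fun m hm => (apply_le_degreeOf hm x).trans_lt hrx
  obtain ⟨m₁, hm₁⟩ := support_nonempty.mpr hA
  have hm₁f : m₁ + Finsupp.single x d ∈ f.support := by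
    have : (m₁ + Finsupp.single x d) ∉ r.support := fun h => by
      simpa [hAzero m₁ hm₁ x le_rfl] using hrx' _ h
    rw [mem_support_iff, coeff_add, coeff_mul_monomial, notMem_support_iff.mp this, mul_one,
      add_zero]
    exact mem_support_iff.mp hm₁
  obtain ⟨mf, hmf⟩ := exists_isLeadMon (ne_zero_of_mem_support hm₁f)
  rcases Finset.mem_union.mp (support_add hmf.1) with h | h
  · obtain ⟨m, hm, n, hn, hmn⟩ := Finset.mem_add.mp (support_mul _ _ h)
    rw [Finset.mem_singleton.mp (support_monomial_subset hn)] at hmn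
    exact ⟨m, hm, hmn ▸ hmf⟩
  · -- a monomial of `r` cannot dominate `m₁ xᵈ`
    have hle := ((hmf.2 _ hm₁f).apply_le_of_forall_lt fun w hw =>
      Nat.le_zero.mp ((apply_le_degreeOf h w).trans (hr w hw).le)).2
    simp only [Finsupp.add_apply, hAzero m₁ hm₁ x le_rfl, Finsupp.single_eq_same,
      zero_add] at hle
    exact absurd (hrx' mf h) hle.not_gt

end LeadingMonomial

section PseudoDivision

theorem exists_pseudoDiv {c : MvPolynomial σ K} {y : σ} (hc : HasLV c y) (f : MvPolynomial σ K) :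
    ∃ (t : ℕ) (q r : MvPolynomial σ K), initialWrt y c ^ t * f = q * c + r ∧
      degreeOf y r < degreeOf y c ∧ ∀ v ∉ c.vars, degreeOf v r ≤ degreeOf v f := by
  set I := initialWrt y c
  set δ := degreeOf y c
  set E := c - I * monomial (Finsupp.single y δ) 1
  let S : Set (σ →₀ ℕ) := {m | m y < δ ∧ ∀ v ∉ c.vars, m v ≤ degreeOf v f}
  let Good : MvPolynomial σ K → Prop := fun g => ∃ t q, I ^ t * g - q * c ∈ restrictSupport K S
  have hIS : ∀ t, ∀ r ∈ restrictSupport K S, I ^ t * r ∈ restrictSupport K S := by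
    intro t r hr
    refine mul_mem_restrictSupport ?_ (s := {m | m y = 0 ∧ ∀ v ∉ c.vars, m v = 0}) ?_ hr
    · rw [Set.add_subset_iff]
      rintro a ⟨hay, ha⟩ b ⟨hby, hb⟩
      exact ⟨by simp [hay, hby], fun v hv => by simp [ha v hv, hb v hv]⟩
    · intro m hm
      have hvars : ∀ v ∉ c.vars, v ∉ (I ^ t).vars := fun v hv hvI =>
        hv (vars_initialWrt (vars_pow I t hvI)).1
      refine ⟨apply_eq_zero_of_mem_support hm fun hy => ?_,
        fun v hv => apply_eq_zero_of_mem_support hm (hvars v hv)⟩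
      exact (vars_initialWrt (vars_pow I t hy)).2 rfl
  have hadd : ∀ g₁ g₂, Good g₁ → Good g₂ → Good (g₁ + g₂) := by
    rintro g₁ g₂ ⟨t₁, q₁, h₁⟩ ⟨t₂, q₂, h₂⟩
    refine ⟨t₁ + t₂, I ^ t₂ * q₁ + I ^ t₁ * q₂, ?_⟩
    convert add_mem (hIS t₂ _ h₁) (hIS t₁ _ h₂) using 1
    ring
  have hE : ∀ m ∈ E.support, m y < δ ∧ ∀ v ∉ c.vars, m v = 0 := fun m hm =>
    ⟨apply_lt_of_mem_support_sub_initialWrt hm, fun v hv =>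
      apply_eq_zero_of_mem_support hm fun hvE => hv (vars_sub_initialWrt_mul_subset y c hvE)⟩
  have hgood : ∀ k g, (∀ m ∈ g.support, m y < k ∧ ∀ v ∉ c.vars, m v ≤ degreeOf v f) →
      Good g := by
    intro k
    induction k with
    | zero =>
      intro g hg
      obtain rfl : g = 0 := support_eq_empty.mp
        (Finset.eq_empty_of_forall_notMem fun m hm => Nat.not_lt_zero _ (hg m hm).1)
      exact ⟨0, 0, by simp⟩
    | succ k ih =>
      intro g hg
      rw [g.as_sum]
      refine Finset.sum_induction _ Good hadd ⟨0, 0, by simp⟩ fun m hm => ?_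
      obtain ⟨hmk, hmv⟩ := hg m hm
      by_cases hmδ : m y < δ
      · exact ⟨0, 0, by simpa [monomial_mem_restrictSupport] using Or.inl ⟨hmδ, hmv⟩⟩
      -- `I yᵟ = c - E` lowers the degree in `y` of `I * X^m` below `m y`
      set m' := m - Finsupp.single y δ
      have hm : m = m' + Finsupp.single y δ :=
        (tsub_add_cancel_of_le (Finsupp.single_le_iff.mpr (not_lt.mp hmδ))).symm
      obtain ⟨t, q, htq⟩ := ih (monomial m' (coeff m g) * E) fun n hn => by
        obtain ⟨a, ha, b, hb, rfl⟩ := Finset.mem_add.mp (support_mul _ _ hn)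
        rw [Finset.mem_singleton.mp (support_monomial_subset ha)]
        obtain ⟨hby, hbv⟩ := hE b hb
        refine ⟨?_, fun v hv => ?_⟩
        · have : m y = m' y + δ := by simp [hm]
          simp only [Finsupp.add_apply]
          omega
        · have : m v = m' v + Finsupp.single y δ v := by simp [hm]
          have := hmv v hv
          simp only [Finsupp.add_apply, hbv v hv]
          omega
      refine ⟨t + 1, I ^ t * monomial m' (coeff m g) - q, ?_⟩
      have hmon : monomial m (coeff m g) = monomial m' (coeff m g) * monomial
          (Finsupp.single y δ) 1 := by rw [monomial_mul, mul_one, ← hm]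
      convert neg_mem htq using 1
      rw [hmon, show c = E + I * monomial (Finsupp.single y δ) 1 by ring]
      ring
  obtain ⟨t, q, hr⟩ := hgood (degreeOf y f + 1) f fun m hm =>
    ⟨Nat.lt_succ_of_le (apply_le_degreeOf hm y), fun v _ => apply_le_degreeOf hm v⟩
  refine ⟨t, q, _, (add_sub_cancel _ _).symm, ?_, fun v hv => ?_⟩
  · exact (degreeOf_lt_iff hc.degreeOf_pos).mpr fun m hm => (hr hm).1
  · exact degreeOf_le_iff.mpr fun m hm => (hr hm).2 v hv

theorem exists_pseudoReduce (l : List (σ × MvPolynomial σ K))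
    (hsort : l.Pairwise fun a b => a.1 < b.1) (hlv : ∀ a ∈ l, HasLV a.2 a.1) {P : Set σ}
    (hP : ∀ a ∈ l, initialWrt a.1 a.2 ∈ supported K P) (f : MvPolynomial σ K) :
    ∃ h r : MvPolynomial σ K, h ≠ 0 ∧ h ∈ supported K P ∧
      h * f - r ∈ Ideal.span {p | ∃ a ∈ l, p = a.2} ∧
      (∀ a ∈ l, degreeOf a.1 r < degreeOf a.1 a.2) ∧
      ∀ v, (∀ a ∈ l, v ∉ a.2.vars) → degreeOf v r ≤ degreeOf v f := by
  induction l with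
  | nil => exact ⟨1, f, one_ne_zero, Subalgebra.one_mem _, by simp, by simp, fun _ _ => le_rfl⟩
  | cons a l ih =>
    simp only [List.pairwise_cons, List.mem_cons, forall_eq_or_imp] at hsort hlv hP ⊢
    obtain ⟨h₁, r₁, hh₁, hh₁P, hmem₁, hred₁, hdeg₁⟩ := ih hsort.2 hlv.2 hP.2
    -- `a` has the smallest leading variable, so dividing by it keeps `r₁` reduced
    obtain ⟨t, q, r, hdiv, hred, hdeg⟩ := exists_pseudoDiv hlv.1 r₁
    have hfree : ∀ b ∈ l, b.1 ∉ a.2.vars := fun b hb hba =>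
      (hlv.1.2 b.1 hba).not_gt (hsort.1 b hb)
    refine ⟨initialWrt a.1 a.2 ^ t * h₁, r,
      mul_ne_zero (pow_ne_zero _ (initialWrt_ne_zero hlv.1.ne_zero _)) hh₁,
      Subalgebra.mul_mem _ (Subalgebra.pow_mem _ hP.1 _) hh₁P, ?_,
      ⟨hred, fun b hb => (hdeg b.1 (hfree b hb)).trans_lt (hred₁ b hb)⟩,
      fun v hv => (hdeg v hv.1).trans (hdeg₁ v hv.2)⟩
    have : initialWrt a.1 a.2 ^ t * h₁ * f - r =
        q * a.2 + initialWrt a.1 a.2 ^ t * (h₁ * f - r₁) := by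
      rw [← sub_eq_iff_eq_add'.mpr hdiv]
      ring
    rw [this]
    refine add_mem (Ideal.mul_mem_left _ _ (Ideal.subset_span ⟨a, Or.inl rfl, rfl⟩))
      (Ideal.mul_mem_left _ _ (Ideal.span_mono ?_ hmem₁))
    rintro p ⟨b, hb, rfl⟩
    exact ⟨b, Or.inr hb, rfl⟩

end PseudoDivision

namespace TriSet

theorem eq_of_fst_eq (T : TriSet K σ) {a b : σ × MvPolynomial σ K} (ha : a ∈ T.elems)
    (hb : b ∈ T.elems) (h : a.1 = b.1) : a = b :=
  List.inj_on_of_nodup_map ((List.pairwise_map.mpr T.sorted).imp ne_of_lt) ha hb h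

theorem exists_mem_fst_eq_of_not_isParam {T : TriSet K σ} {w : σ} (hw : ¬T.IsParam w) :
    ∃ a ∈ T.elems, a.1 = w := by
  simpa [IsParam, lvs] using hw

theorem not_isParam_fst {T : TriSet K σ} {a : σ × MvPolynomial σ K} (ha : a ∈ T.elems) :
    ¬T.IsParam a.1 :=
  fun h => h (List.mem_map_of_mem ha)

theorem ideal_le_sat (T : TriSet K σ) : T.ideal ≤ T.sat :=
  fun p hp => ⟨0, by simpa using hp⟩

theorem mem_sat_of_initialWrt_mul_mem {T : TriSet K σ} {e : σ × MvPolynomial σ K}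
    (he : e ∈ T.elems) {p : MvPolynomial σ K} (hp : initialWrt e.1 e.2 * p ∈ T.ideal) :
    p ∈ T.sat := by
  obtain ⟨k, hk⟩ := List.dvd_prod (List.mem_map_of_mem (f := fun a => initialWrt a.1 a.2) he)
  refine ⟨1, ?_⟩
  rw [pow_one, prodInit, hk, mul_comm (initialWrt _ _), mul_assoc]
  exact T.ideal.mul_mem_left k hp

def elemsBelow (T : TriSet K σ) (x : σ) : List (σ × MvPolynomial σ K) :=
  T.elems.filter fun a => a.1 < x

/-- The monomials `x^a`, `a ≤ T.reducedBound x`, are those in the leading variables below `x`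
that are reduced with respect to `T.elemsBelow x`. -/
noncomputable def reducedBound (T : TriSet K σ) (x : σ) : σ →₀ ℕ :=
  ((T.elemsBelow x).map fun a => Finsupp.single a.1 (degreeOf a.1 a.2 - 1)).sum

variable {T : TriSet K σ} {x : σ}

theorem mem_elemsBelow {a : σ × MvPolynomial σ K} : a ∈ T.elemsBelow x ↔ a ∈ T.elems ∧ a.1 < x := by
  simp [elemsBelow]

theorem elemsBelow_sorted (T : TriSet K σ) (x : σ) :
    (T.elemsBelow x).Pairwise fun a b => a.1 < b.1 :=
  T.sorted.filter _

theorem elemsBelow_nodup (T : TriSet K σ) (x : σ) : (T.elemsBelow x).Nodup :=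
  (T.elemsBelow_sorted x).imp fun h he => (he ▸ h).false

theorem reducedBound_apply_fst {a : σ × MvPolynomial σ K} (ha : a ∈ T.elems) :
    T.reducedBound x a.1 = if a.1 < x then degreeOf a.1 a.2 - 1 else 0 := by
  classical
  rw [reducedBound, ← List.sum_toFinset _ (T.elemsBelow_nodup x), Finsupp.finsetSum_apply]
  have hother : ∀ b ∈ (T.elemsBelow x).toFinset, b ≠ a →
      Finsupp.single b.1 (degreeOf b.1 b.2 - 1) a.1 = 0 := fun b hb hba =>
    Finsupp.single_eq_of_ne fun h =>
      hba (T.eq_of_fst_eq (mem_elemsBelow.mp (List.mem_toFinset.mp hb)).1 ha h.symm)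
  split_ifs with hax
  · rw [Finset.sum_eq_single a hother fun h => (h (List.mem_toFinset.mpr
      (mem_elemsBelow.mpr ⟨ha, hax⟩))).elim, Finsupp.single_eq_same]
  · refine Finset.sum_eq_zero fun b hb => ?_
    refine hother b hb fun hba => hax ?_
    exact hba ▸ (mem_elemsBelow.mp (List.mem_toFinset.mp hb)).2

theorem reducedBound_apply_fst_lt {a : σ × MvPolynomial σ K} (ha : a ∈ T.elems) :
    T.reducedBound x a.1 < degreeOf a.1 a.2 := by
  have := (T.hlv a ha).degreeOf_pos
  rw [reducedBound_apply_fst ha]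
  split_ifs <;> omega

theorem reducedBound_apply_of_isParam {w : σ} (hw : T.IsParam w) : T.reducedBound x w = 0 := by
  classical
  rw [reducedBound, ← List.sum_toFinset _ (T.elemsBelow_nodup x), Finsupp.finsetSum_apply]
  refine Finset.sum_eq_zero fun a ha => Finsupp.single_eq_of_ne fun h => hw ?_
  exact h ▸ List.mem_map_of_mem (mem_elemsBelow.mp (List.mem_toFinset.mp ha)).1

theorem degreeOf_eq_zero_of_mem_restrictSupport {u : MvPolynomial σ K}
    (hu : u ∈ restrictSupport K (boundedOutside {w | T.IsParam w} (T.reducedBound x))) {w : σ}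
    (hw : ¬T.IsParam w) (hxw : x ≤ w) : degreeOf w u = 0 := by
  obtain ⟨a, ha, rfl⟩ := exists_mem_fst_eq_of_not_isParam hw
  refine Nat.le_zero.mp (degreeOf_le_iff.mpr fun m hm => ?_)
  simpa [reducedBound_apply_fst ha, hxw.not_gt] using (Finset.mem_coe.mpr hm |> hu) a.1 hw

theorem exists_pseudoReduce_elemsBelow (T : TriSet K σ) (x : σ) {P : Set σ}
    (hP : ∀ a ∈ T.elemsBelow x, initialWrt a.1 a.2 ∈ supported K P) (f : MvPolynomial σ K) :
    ∃ h r : MvPolynomial σ K, h ≠ 0 ∧ h ∈ supported K P ∧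
      h * f - r ∈ Ideal.span {p | ∃ a ∈ T.elemsBelow x, p = a.2} ∧
      (∀ a ∈ T.elemsBelow x, degreeOf a.1 r < degreeOf a.1 a.2) ∧
      ∀ v, x ≤ v → degreeOf v r ≤ degreeOf v f := by
  obtain ⟨h, r, hh0, hhP, hmem, hred, hdeg⟩ := exists_pseudoReduce (T.elemsBelow x)
    (T.elemsBelow_sorted x) (fun a ha => T.hlv a (mem_elemsBelow.mp ha).1) hP f
  refine ⟨h, r, hh0, hhP, hmem, hred, fun v hv => hdeg v fun a ha hva => ?_⟩
  obtain ⟨ha, hlt⟩ := mem_elemsBelow.mp ha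
  exact (((T.hlv a ha).2 v hva).trans_lt hlt).not_ge hv

theorem span_elemsBelow_le_ideal (T : TriSet K σ) (x : σ) :
    Ideal.span {p | ∃ a ∈ T.elemsBelow x, p = a.2} ≤ T.ideal :=
  Ideal.span_mono fun _ ⟨a, ha, hp⟩ => ⟨a, (mem_elemsBelow.mp ha).1, hp⟩

end TriSet

section Normal

variable {G : Set (MvPolynomial σ K)} {C : TriSet K σ}

/-- `mg ≤ mf` is the leading monomial of some `g ∈ G`, and `a` is the element of `C` with the
leading variable of `g`, lex-minimal among such elements of `G`. -/
theorem exists_le_leadMon_of_mem_span (hG : IsReducedGB G (Ideal.span G)) (hC : IsWCharOf C G)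
    {e : σ × MvPolynomial σ K} (he : e ∈ C.elems) {f : MvPolynomial σ K}
    (hf : f ∈ Ideal.span G) {mf : σ →₀ ℕ} (hmf : IsLeadMon f mf) :
    ∃ a ∈ C.elems, ∃ mg ≤ mf, degreeOf a.1 a.2 ≤ mg a.1 ∧
      ∀ me, IsLeadMon a.2 me → lexLe me mg := by
  obtain ⟨g, hg, mf', mg, hmf', hmg, hdvd⟩ :=
    hG.1.2.2 f hf (ne_zero_of_mem_support hmf.1)
  obtain rfl := hmf'.unique hmf
  have hvars : g.vars.Nonempty := by
    rw [Finset.nonempty_iff_ne_empty]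
    intro hempty
    have hmg0 : mg = 0 := Finsupp.ext fun w =>
      apply_eq_zero_of_mem_support hmg.1 (by simp [hempty])
    have heg : e.2 ≠ g := by
      rintro heg
      simpa [heg, hempty] using (C.hlv e he).1
    obtain ⟨m, hm⟩ := support_nonempty.mpr (C.hlv e he).ne_zero
    exact hG.2.2.2 e.2 (hC.1 e he).1 g hg heg.symm m hm mg hmg (by simp [hmg0])
  have hgv : HasLV g (g.vars.max' hvars) :=
    ⟨g.vars.max'_mem hvars, fun w hw => g.vars.le_max' w hw⟩
  obtain ⟨a, ha, hav⟩ : ∃ a ∈ C.elems, a.1 = g.vars.max' hvars := by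
    simpa [TriSet.lvs] using hC.2 g hg _ hgv
  rw [← hav] at hgv
  have hlex : ∀ me, IsLeadMon a.2 me → lexLe me mg := fun me hme =>
    (hC.1 a ha).2 g hg hgv mg me hmg hme
  obtain ⟨me, hme⟩ := exists_isLeadMon (C.hlv a ha).ne_zero
  refine ⟨a, ha, mg, fun w => hdvd w, ?_, hlex⟩
  rw [← (C.hlv a ha).leadMon_apply hme]
  exact ((hlex me hme).apply_le_of_forall_lt fun w => hgv.apply_eq_zero hmg.1).2

theorem exists_degreeOf_le_of_mem_span (hG : IsReducedGB G (Ideal.span G)) (hC : IsWCharOf C G)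
    {e : σ × MvPolynomial σ K} (he : e ∈ C.elems) {f : MvPolynomial σ K}
    (hf : f ∈ Ideal.span G) (hf0 : f ≠ 0) :
    ∃ m ∈ f.support, ∃ a ∈ C.elems, degreeOf a.1 a.2 ≤ m a.1 := by
  obtain ⟨mf, hmf⟩ := exists_isLeadMon hf0
  obtain ⟨a, ha, mg, hle, hdeg, -⟩ := exists_le_leadMon_of_mem_span hG hC he hf hmf
  exact ⟨mf, hmf.1, a, ha, hdeg.trans (hle a.1)⟩

/-- The Gröbner divisor of such a leading monomial can only be compared with `e`. The monomial of
`e` through which `j` enters `ini(e)` is lex-below it, yet the two first differ at a parameter,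
which lies below `j`. -/
theorem not_isLeadMon_add_single_of_mem_span (hG : IsReducedGB G (Ideal.span G))
    (hC : IsWCharOf C G) (hord : ∀ j, C.IsParam j → ∀ e ∈ C.elems, j < e.1)
    {e : σ × MvPolynomial σ K} (he : e ∈ C.elems) {j : σ}
    (hj : j ∈ (initialWrt e.1 e.2).vars) (hjP : ¬C.IsParam j) {f : MvPolynomial σ K}
    (hf : f ∈ Ideal.span G) {m : σ →₀ ℕ} (hm : ∀ w, ¬C.IsParam w → m w = 0) :
    ¬IsLeadMon f (m + Finsupp.single e.1 (degreeOf e.1 e.2)) := by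
  intro hmf
  set x := e.1
  set d := degreeOf x e.2
  obtain ⟨a, ha, mg, hle, hdeg, hlex⟩ := exists_le_leadMon_of_mem_span hG hC he hf hmf
  have hax : a.1 = x := by
    by_contra hax
    have := (C.hlv a ha).degreeOf_pos.trans_le (hdeg.trans (hle a.1))
    simp [hm a.1 (C.not_isParam_fst ha), Ne.symm hax] at this
  obtain rfl := C.eq_of_fst_eq ha he hax
  obtain ⟨n, hn, hnj⟩ := (mem_vars_iff_mem_support j).mp hj
  obtain ⟨hnx, hn'⟩ := mem_support_initialWrt hn
  have hjx : j ≠ x := (vars_initialWrt hj).2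
  obtain ⟨me, hme⟩ := exists_isLeadMon (C.hlv a he).ne_zero
  have hmgx : mg x = d := le_antisymm (by simpa [hm x (C.not_isParam_fst he)] using hle x) hdeg
  have key := (lexLe_trans (hme.2 _ hn') (hlex me hme)).apply_eq_of_forall_lt (j := j) ?_
  · have := hle j
    simp only [Finsupp.update_apply, if_neg hjx] at key
    simp [← key, hm j hjP, Ne.symm hjx] at this
    exact Finsupp.mem_support_iff.mp hnj this
  · intro i hi
    have hix : i ≠ x := by
      rintro rfl
      simp [hmgx, d] at hi
    have hiP : C.IsParam i := by
      by_contra hiP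
      simpa [hm i hiP, Ne.symm hix] using (hi.trans_le (hle i))
    obtain ⟨b, hb, rfl⟩ := TriSet.exists_mem_fst_eq_of_not_isParam hjP
    exact hord i hiP b hb

/-- Over the parameters and modulo the elements below `e`, `ini(e)` acts on the reduced monomials
by a matrix, so it is a zero divisor (`c = 0`) or invertible up to the scalar `c`. -/
theorem exists_initialWrt_mul_sub_mem_span {e : σ × MvPolynomial σ K} (he : e ∈ C.elems)
    (hbelow : ∀ a ∈ C.elemsBelow e.1, initialWrt a.1 a.2 ∈ supported K {w | C.IsParam w}) :
    ∃ u c, u ∈ restrictSupport K (boundedOutside {w | C.IsParam w} (C.reducedBound e.1)) ∧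
      c ∈ supported K {w | C.IsParam w} ∧ (u ≠ 0 ∨ c ≠ 0) ∧
      initialWrt e.1 e.2 * u - c ∈ Ideal.span {p | ∃ a ∈ C.elemsBelow e.1, p = a.2} := by
  set P := {w | C.IsParam w}
  set b := C.reducedBound e.1
  set I := initialWrt e.1 e.2
  have hcol : ∀ β : Finset.Iic b, ∃ h : supported K P, h ≠ 0 ∧
      ∃ col : Finset.Iic b → supported K P,
        h • (I * monomial (β : σ →₀ ℕ) 1) - ∑ γ, col γ • monomial (γ : σ →₀ ℕ) (1 : K) ∈
          Ideal.span {p | ∃ a ∈ C.elemsBelow e.1, p = a.2} := by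
    intro β
    obtain ⟨h, r, hh0, hhP, hmem, hred, hdeg⟩ :=
      C.exists_pseudoReduce_elemsBelow e.1 hbelow (I * monomial (β : σ →₀ ℕ) 1)
    have hr : r ∈ restrictSupport K (boundedOutside P b) := by
      rw [mem_restrictSupport_iff]
      intro m hm w hw
      obtain ⟨a, ha, rfl⟩ := TriSet.exists_mem_fst_eq_of_not_isParam hw
      have hma := apply_le_degreeOf (Finset.mem_coe.mp hm) a.1
      rw [TriSet.reducedBound_apply_fst ha]
      split_ifs with hax
      · have := hred a (TriSet.mem_elemsBelow.mpr ⟨ha, hax⟩)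
        omega
      · -- `a.1 ≥ e.1` occurs neither in the divisors nor in `I * x^β`
        have hfree : a.1 ∉ (I * monomial (β : σ →₀ ℕ) 1).vars := fun hv => by
          rcases Finset.mem_union.mp (vars_mul _ _ hv) with hv | hv
          · obtain ⟨hve, hvx⟩ := vars_initialWrt hv
            exact hax (((C.hlv e he).2 _ hve).lt_of_ne hvx)
          · rw [vars_monomial one_ne_zero, Finsupp.mem_support_iff] at hv
            have := Finset.mem_Iic.mp β.2 a.1
            rw [TriSet.reducedBound_apply_fst ha, if_neg hax] at this
            omega
        have := hdeg a.1 (not_lt.mp hax)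
        rw [mem_vars_iff_degreeOf_ne_zero, not_not] at hfree
        omega
    obtain ⟨col, hcol⟩ := exists_eq_sum_smul_monomial hr
    exact ⟨⟨h, hhP⟩, fun h0 => hh0 (congrArg Subtype.val h0), col, by rwa [← hcol]⟩
  obtain ⟨D, hD, M, hM⟩ := exists_smul_mul_sub_sum_smul_mem hcol
  obtain ⟨w, c, hwc, hmem⟩ := exists_mul_sum_smul_sub_algebraMap_mem
    (β₀ := ⟨0, Finset.mem_Iic.mpr bot_le⟩) (by simp) M hM
  have hb : ∀ w ∈ P, b w = 0 := fun w hw => TriSet.reducedBound_apply_of_isParam hw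
  refine ⟨(D : MvPolynomial σ K) * ∑ β, w β • monomial (β : σ →₀ ℕ) (1 : K), c,
    mul_mem_restrictSupport_boundedOutside D.2 (sum_smul_monomial_mem_restrictSupport w), c.2,
    hwc.imp (fun hw => mul_ne_zero (fun h0 => hD (Subtype.ext h0))
      fun h0 => hw (sum_smul_monomial_eq_zero hb h0)) fun hc h0 => hc (Subtype.ext h0), ?_⟩
  convert hmem using 1
  simp only [Subalgebra.smul_def, smul_eq_mul, Subalgebra.algebraMap_apply]
  ring

theorem initialWrt_mul_notMem_span_elemsBelow (hG : IsReducedGB G (Ideal.span G))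
    (hC : IsWCharOf C G) (hchar : Ideal.span G = C.sat) {e : σ × MvPolynomial σ K}
    (he : e ∈ C.elems) {u : MvPolynomial σ K}
    (hu : u ∈ restrictSupport K (boundedOutside {w | C.IsParam w} (C.reducedBound e.1)))
    (hu0 : u ≠ 0) :
    initialWrt e.1 e.2 * u ∉ Ideal.span {p | ∃ a ∈ C.elemsBelow e.1, p = a.2} := by
  intro hmem
  have hsat : u ∈ Ideal.span G :=
    hchar ▸ C.mem_sat_of_initialWrt_mul_mem he (C.span_elemsBelow_le_ideal _ hmem)
  obtain ⟨m, hm, a, ha, hdeg⟩ := exists_degreeOf_le_of_mem_span hG hC he hsat hu0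
  have := (Finset.mem_coe.mpr hm |> hu) a.1 (C.not_isParam_fst ha)
  have := C.reducedBound_apply_fst_lt (x := e.1) ha
  omega

/-- With `e.2 = ini(e) xᵈ + E`, reducing `u E` modulo the elements below `e` turns a multiple of
`u e.2` into `h c xᵈ + r` with `deg_x r < d`. -/
theorem exists_mem_span_isLeadMon_add_single (hC : IsWCharOf C G)
    (hchar : Ideal.span G = C.sat) (hord : ∀ j, C.IsParam j → ∀ e ∈ C.elems, j < e.1)
    {e : σ × MvPolynomial σ K} (he : e ∈ C.elems)
    (hbelow : ∀ a ∈ C.elemsBelow e.1, initialWrt a.1 a.2 ∈ supported K {w | C.IsParam w})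
    {u c : MvPolynomial σ K}
    (hu : u ∈ restrictSupport K (boundedOutside {w | C.IsParam w} (C.reducedBound e.1)))
    (hc : c ∈ supported K {w | C.IsParam w}) (hc0 : c ≠ 0)
    (hmem : initialWrt e.1 e.2 * u - c ∈ Ideal.span {p | ∃ a ∈ C.elemsBelow e.1, p = a.2}) :
    ∃ f ∈ Ideal.span G, ∃ m : σ →₀ ℕ, (∀ w, ¬C.IsParam w → m w = 0) ∧
      IsLeadMon f (m + Finsupp.single e.1 (degreeOf e.1 e.2)) := by
  set x := e.1
  set d := degreeOf x e.2
  set I := initialWrt x e.2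
  set E := e.2 - I * monomial (Finsupp.single x d) 1
  have hspan : Ideal.span {p | ∃ a ∈ C.elemsBelow x, p = a.2} ≤ Ideal.span G :=
    (C.span_elemsBelow_le_ideal x).trans (C.ideal_le_sat.trans hchar.ge)
  have hnotP : ∀ w, x ≤ w → ¬C.IsParam w := fun w hw hP => (hord w hP e he).not_ge hw
  have hE : ∀ w, x < w → degreeOf w E = 0 := fun w hw => by
    by_contra h
    exact ((C.hlv e he).2 w (vars_sub_initialWrt_mul_subset _ _
      (mem_vars_iff_degreeOf_ne_zero.mpr h))).not_gt hw
  obtain ⟨h, r, hh0, hhP, hmemr, -, hdeg⟩ := C.exists_pseudoReduce_elemsBelow x hbelow (u * E)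
  have hrx : degreeOf x r < d := by
    have := degreeOf_mul_le x u E
    have : degreeOf x E < d := (degreeOf_lt_iff (C.hlv e he).degreeOf_pos).mpr fun m hm =>
      apply_lt_of_mem_support_sub_initialWrt hm
    have : degreeOf x u = 0 :=
      TriSet.degreeOf_eq_zero_of_mem_restrictSupport hu (hnotP x le_rfl) le_rfl
    have := hdeg x le_rfl
    omega
  have hr : ∀ w, x < w → degreeOf w r = 0 := fun w hw => by
    have := degreeOf_mul_le w u E
    have := TriSet.degreeOf_eq_zero_of_mem_restrictSupport hu (hnotP w hw.le) hw.le
    have := hdeg w hw.le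
    have := hE w hw
    omega
  have hf : h * c * monomial (Finsupp.single x d) 1 + r = h * u * e.2 -
      h * monomial (Finsupp.single x d) 1 * (I * u - c) - (h * (u * E) - r) := by
    simp only [E]
    ring
  have hA : h * c ∈ supported K {w | C.IsParam w} := Subalgebra.mul_mem _ hhP hc
  obtain ⟨m, hm, hlead⟩ := isLeadMon_mul_monomial_add (mul_ne_zero hh0 hc0)
    (fun w hw => hord w (mem_supported.mp hA hw) e he) hrx hr
  refine ⟨_, ?_, m, fun w hw => mem_supported_iff_apply_eq_zero.mp hA m hm w hw, hlead⟩
  rw [hf]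
  exact sub_mem (sub_mem (Ideal.mul_mem_left _ _ (Ideal.subset_span (hC.1 e he).1))
    (Ideal.mul_mem_left _ _ (hspan hmem))) (hspan hmemr)

theorem initialWrt_mem_supported_of_elemsBelow (hG : IsReducedGB G (Ideal.span G))
    (hC : IsWCharOf C G) (hchar : Ideal.span G = C.sat)
    (hord : ∀ j, C.IsParam j → ∀ e ∈ C.elems, j < e.1) {e : σ × MvPolynomial σ K}
    (he : e ∈ C.elems)
    (hbelow : ∀ a ∈ C.elemsBelow e.1, initialWrt a.1 a.2 ∈ supported K {w | C.IsParam w}) :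
    initialWrt e.1 e.2 ∈ supported K {w | C.IsParam w} := by
  rw [mem_supported]
  intro j hj
  by_contra hjP
  obtain ⟨u, c, hu, hc, hne, hmem⟩ := exists_initialWrt_mul_sub_mem_span he hbelow
  rcases eq_or_ne c 0 with rfl | hc0
  · rw [sub_zero] at hmem
    exact initialWrt_mul_notMem_span_elemsBelow hG hC hchar he hu (hne.resolve_right (by simp))
      hmem
  · obtain ⟨f, hf, m, hm, hlead⟩ :=
      exists_mem_span_isLeadMon_add_single hC hchar hord he hbelow hu hc hc0 hmem
    exact not_isLeadMon_add_single_of_mem_span hG hC hord he hj hjP hf hm hlead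

theorem IsWCharOf.normal [WellFoundedLT σ] (hG : IsReducedGB G (Ideal.span G))
    (hC : IsWCharOf C G) (hchar : Ideal.span G = C.sat)
    (hord : ∀ j, C.IsParam j → ∀ e ∈ C.elems, j < e.1) : C.Normal := by
  suffices ∀ x, ∀ e ∈ C.elems, e.1 = x → initialWrt e.1 e.2 ∈ supported K {w | C.IsParam w} from
    fun e he j hj => mem_supported.mp (this e.1 e he rfl) hj
  intro x
  induction x using WellFoundedLT.induction with
  | _ x ih =>
    rintro e he rfl
    exact initialWrt_mem_supported_of_elemsBelow hG hC hchar hord he fun a ha =>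
      ih a.1 (TriSet.mem_elemsBelow.mp ha).2 a (TriSet.mem_elemsBelow.mp ha).1 rfl

end Normal

end CharDec

/-- Let `G` be a characterizable reduced lex Gröbner basis,
i.e. `⟨G⟩ = sat(C)` where `C` is the W-characteristic set of `⟨G⟩`, and
assume the parameters of `C` are all smaller than the other variables. Then
`C` is normal. -/
theorem stmt_11 {K : Type*} [Field K] {n : ℕ}
    (G : Set (MvPolynomial (Fin n) K)) (C : TriSet K (Fin n))
    (hG : IsReducedGB G (Ideal.span G)) (hC : IsWCharOf C G)
    (hchar : Ideal.span G = C.sat)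
    (hord : ∀ j : Fin n, C.IsParam j → ∀ e ∈ C.elems, j < e.1) :
    C.Normal :=
  hC.normal hG hchar hord
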